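/- arXiv:math/0609263 — 2 statements merged into one kernel-verified Lean document; each statement's English description precedes it below -/
import Mathlib

section
/- Define polynomials F_i ∈ ℚ[Y] recursively by F_0(Y) = Y − 1 and F_{i+1}(Y) = (Y² − Y) · Y · F_i′(Y) (i.e., F_{i+1} = (Y² − Y)∇_Y F_i with ∇_Y := Y d/dY). Then for every i ≥ 0, substituting the power series y(x) := (1 − w(x))^{-1} into F_i yields φ_i(x); that is, F_i(y(x)) = Σ_{m≥1} (m^{m+i}/m!) x^m in ℚ[[x]]. -/
open PowerSeries

/-- The rooted tree series `w(x) = Σ_{m≥1} (m^{m-1}/m!) x^m ∈ ℚ⟦x⟧`. -/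
noncomputable def rootedTree : ℚ⟦X⟧ :=
  PowerSeries.mk fun m => if m = 0 then 0 else (m : ℚ) ^ (m - 1) / m.factorial

/-- The series `φ_i(x) = Σ_{m≥1} (m^{m+i}/m!) x^m ∈ ℚ⟦x⟧`. -/
noncomputable def phi (i : ℕ) : ℚ⟦X⟧ :=
  PowerSeries.mk fun m => if m = 0 then 0 else (m : ℚ) ^ (m + i) / m.factorial

/-- The series `y(x) = (1 − w(x))⁻¹ ∈ ℚ⟦x⟧`. -/
noncomputable def ySeries : ℚ⟦X⟧ := (1 - rootedTree)⁻¹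

/-- The polynomials `F_0(Y) = Y − 1`, `F_{i+1}(Y) = (Y² − Y)·Y·F_i′(Y)`. -/
noncomputable def F : ℕ → Polynomial ℚ
  | 0 => Polynomial.X - 1
  | i + 1 =>
      (Polynomial.X ^ 2 - Polynomial.X) * (Polynomial.X * Polynomial.derivative (F i))

/-!
Write `T = w(x)`, `∇ = x d/dx`, and let `E = 1 + φ₀ = Σ_{n≥0} nⁿ xⁿ/n!`. Comparing
coefficients of the exponential generating functions, `T · E = φ₀` is Abel's identity
`Σ_{k=1}^{n} C(n,k) k^(k-1) (n-k)^(n-k) = nⁿ`; it is proved for the polynomial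
`A_n(X) = Σ_k C(n,k) k^(k-1) (X + n - k)^(n-k)`, which satisfies `A_{n+1}' = (n+1) A_n(X+1)` and
vanishes at `X = -n` for `n ≥ 2` because `n`-th finite differences kill `k^(n-1)`; hence `A_n = n (X+n)^(n-1)`.
Then `(1 - T) E = 1`, i.e. `y = 1 + φ₀`. Since `∇T = φ₀` and `∇φᵢ = φᵢ₊₁`, we get
`∇y = y² ∇T = y² (y - 1)`, and the chain rule `∇ F(y) = F'(y) ∇y` turns the recursion for `Fᵢ`
into the recursion for `φᵢ`.
-/

open Finset

def rootedTreeCount (k : ℕ) : ℕ := if k = 0 then 0 else k ^ (k - 1)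

lemma rootedTreeCount_mul_pow {i j : ℕ} (hij : 1 < i + j) :
    rootedTreeCount i * i ^ j = i ^ (i + j - 1) := by
  rcases Nat.eq_zero_or_pos i with rfl | hi
  · simp [rootedTreeCount, zero_pow (by omega : j - 1 ≠ 0)]
  · rw [rootedTreeCount, if_neg hi.ne', ← pow_add]
    congr 1
    omega

lemma sum_neg_one_pow_mul_choose_mul_pow_eq_zero {R : Type*} [CommRing R] {j n : ℕ} (h : j < n) :
    ∑ k ∈ range (n + 1), (-1 : R) ^ (n - k) * n.choose k * (k : R) ^ j = 0 := by
  have := congr_fun (fwdDiff_iter_pow_eq_zero_of_lt (R := R) h) 0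
  rw [fwdDiff_iter_eq_sum_shift] at this
  simpa [zsmul_eq_mul] using this

namespace Polynomial

variable {R : Type*} [CommRing R]

lemma eq_of_derivative_eq_of_eval_eq [IsAddTorsionFree R] {p q : R[X]} (a : R)
    (hd : derivative p = derivative q) (ha : p.eval a = q.eval a) : p = q := by
  have hconst := eq_C_of_derivative_eq_zero (p := p - q) (by rw [derivative_sub, hd, sub_self])
  have h0 : (p - q).coeff 0 = 0 := by
    simpa [ha] using (congr_arg (eval a) hconst).symm
  rwa [h0, C_0, sub_eq_zero] at hconst

variable (R) in
noncomputable def abelPoly (n : ℕ) : R[X] :=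
  ∑ p ∈ antidiagonal n, ((n.choose p.1 * rootedTreeCount p.1 : ℕ) : R[X]) * (X + (p.2 : R[X])) ^ p.2

lemma derivative_abelPoly (n : ℕ) :
    derivative (abelPoly R (n + 1)) = (n + 1 : R[X]) * (abelPoly R n).comp (X + 1) := by
  rw [abelPoly, abelPoly, derivative_sum, Nat.sum_antidiagonal_succ', Polynomial.sum_comp, mul_sum]
  simp only [pow_zero, mul_one, derivative_natCast, zero_add, mul_comp, natCast_comp, pow_comp,
    add_comp, X_comp]
  refine sum_congr rfl fun ⟨i, j⟩ h => ?_
  obtain rfl := mem_antidiagonal.mp h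
  have hchoose : ((i + j + 1).choose i * (j + 1) : R[X]) = (i + j + 1) * (i + j).choose i := by
    have := Nat.choose_mul_succ_eq (i + j) i
    rw [show i + j + 1 - i = j + 1 by omega, mul_comm] at this
    exact_mod_cast congr_arg (Nat.cast : ℕ → R[X]) this.symm
  rw [derivative_natCast_mul, derivative_pow]
  simp only [derivative_add, derivative_X, derivative_natCast, add_zero, mul_one,
    Nat.add_sub_cancel, map_natCast]
  push_cast
  linear_combination (rootedTreeCount i : R[X]) * (X + 1 + (j : R[X])) ^ j * hchoose

lemma eval_abelPoly (n : ℕ) : (abelPoly R (n + 2)).eval (-(n + 2 : R)) = 0 := by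
  have hterm : ∀ p ∈ antidiagonal (n + 2),
      eval (-(n + 2 : R))
          ((((n + 2).choose p.1 * rootedTreeCount p.1 : ℕ) : R[X]) * (X + (p.2 : R[X])) ^ p.2)
        = (-1) ^ (n + 2 - p.1) * (n + 2).choose p.1 * (p.1 : R) ^ (n + 1) := by
    rintro ⟨i, j⟩ h
    have hij : i + j = n + 2 := mem_antidiagonal.mp h
    have hpow : ((rootedTreeCount i * i ^ j : ℕ) : R) = (i : R) ^ (n + 1) := by
      rw [rootedTreeCount_mul_pow (by omega), hij]
      push_cast
      rfl
    have hbase : -(n + 2 : R) + j = -1 * i := by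
      rw [← Nat.cast_ofNat, ← Nat.cast_add, ← hij]
      push_cast
      ring
    simp only [eval_mul, eval_natCast, eval_pow, eval_add, eval_X, hbase, mul_pow,
      show n + 2 - i = j by omega]
    rw [← hpow]
    push_cast
    ring
  rw [abelPoly, eval_finsetSum, sum_congr rfl hterm, Nat.sum_antidiagonal_eq_sum_range_succ_mk]
  exact sum_neg_one_pow_mul_choose_mul_pow_eq_zero (by omega)

lemma abelPoly_succ [IsAddTorsionFree R] (n : ℕ) :
    abelPoly R (n + 1) = (n + 1 : R[X]) * (X + (n + 1 : R[X])) ^ n := by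
  induction n with
  | zero => simp [abelPoly, rootedTreeCount, Nat.sum_antidiagonal_succ]
  | succ n ih =>
    refine eq_of_derivative_eq_of_eval_eq (-(n + 2)) ?_ ?_
    · rw [derivative_abelPoly, ih]
      simp only [derivative_mul, derivative_pow, derivative_add, derivative_X, derivative_natCast,
        derivative_one, mul_comp, pow_comp, add_comp, X_comp, natCast_comp, one_comp, map_natCast]
      push_cast
      ring
    · rw [eval_abelPoly]
      simp only [eval_mul, eval_pow, eval_add, eval_X, eval_natCast, eval_one]
      push_cast
      ring

end Polynomial

theorem sum_antidiagonal_choose_mul_rootedTreeCount {n : ℕ} (hn : n ≠ 0) :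
    ∑ p ∈ antidiagonal n, n.choose p.1 * rootedTreeCount p.1 * p.2 ^ p.2 = n ^ n := by
  obtain ⟨n, rfl⟩ : ∃ m, n = m + 1 := ⟨n - 1, by omega⟩
  have := congr_arg (Polynomial.eval 0) (Polynomial.abelPoly_succ (R := ℤ) n)
  simp only [Polynomial.abelPoly, Polynomial.eval_finsetSum, Polynomial.eval_mul,
    Polynomial.eval_natCast, Polynomial.eval_pow, Polynomial.eval_add, Polynomial.eval_X,
    Polynomial.eval_one, zero_add, ← pow_succ'] at this
  exact_mod_cast this

theorem PowerSeries.coeff_mk_div_factorial_mul_mk_div_factorial {K : Type*} [Field K] [CharZero K]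
    (a b : ℕ → K) (n : ℕ) :
    coeff n (mk (fun k => a k / k.factorial) * mk fun k => b k / k.factorial) =
      (∑ p ∈ antidiagonal n, n.choose p.1 * a p.1 * b p.2) / n.factorial := by
  rw [coeff_mul, sum_div]
  refine sum_congr rfl fun ⟨i, j⟩ h => ?_
  obtain rfl : i + j = n := mem_antidiagonal.mp h
  have : ((i + j).factorial : K) ≠ 0 := Nat.cast_ne_zero.mpr (Nat.factorial_ne_zero _)
  rw [coeff_mk, coeff_mk, Nat.cast_add_choose]
  field_simp

theorem PowerSeries.X_mul_derivative_mk {R : Type*} [CommSemiring R] (f : ℕ → R) :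
    X * d⁄dX R (mk f) = mk fun n => n * f n := by
  ext (_ | n)
  · simp
  · rw [coeff_succ_X_mul, coeff_derivative, coeff_mk, coeff_mk]
    push_cast
    ring

lemma X_mul_derivative_phi (i : ℕ) : X * d⁄dX ℚ (phi i) = phi (i + 1) := by
  rw [phi, X_mul_derivative_mk, phi]
  congr 1 with n
  split_ifs
  · simp
  · rw [← add_assoc, pow_succ]
    ring

lemma X_mul_derivative_rootedTree : X * d⁄dX ℚ rootedTree = phi 0 := by
  rw [rootedTree, X_mul_derivative_mk, phi]
  congr 1 with n
  split_ifs with hn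
  · simp
  · rw [add_zero, ← mul_pow_sub_one hn]
    ring

lemma rootedTree_eq_mk : rootedTree = mk fun k => (rootedTreeCount k : ℚ) / k.factorial := by
  rw [rootedTree]
  congr 1 with k
  split_ifs with hk <;> simp [rootedTreeCount, hk]

lemma one_add_phi_zero : 1 + phi 0 = mk fun k => ((k ^ k : ℕ) : ℚ) / k.factorial := by
  ext (_ | k) <;> simp [phi, PowerSeries.coeff_one]

lemma rootedTree_mul_one_add_phi_zero : rootedTree * (1 + phi 0) = phi 0 := by
  ext n
  rw [rootedTree_eq_mk, one_add_phi_zero, coeff_mk_div_factorial_mul_mk_div_factorial, phi,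
    coeff_mk]
  split_ifs with hn
  · simp [hn, rootedTreeCount]
  · have habel := sum_antidiagonal_choose_mul_rootedTreeCount hn
    rw [add_zero, ← Nat.cast_pow, ← habel]
    push_cast
    rfl

lemma ySeries_eq_one_add_phi_zero : ySeries = 1 + phi 0 := by
  rw [ySeries, eq_comm, PowerSeries.eq_inv_iff_mul_eq_one (by simp [rootedTree])]
  linear_combination -rootedTree_mul_one_add_phi_zero

lemma X_mul_derivative_ySeries : X * d⁄dX ℚ ySeries = ySeries ^ 2 * (ySeries - 1) := by
  have hD : d⁄dX ℚ ySeries = ySeries ^ 2 * d⁄dX ℚ rootedTree := by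
    rw [ySeries, derivative_inv', map_sub, derivative_one]
    ring
  rw [hD, mul_left_comm, X_mul_derivative_rootedTree, ySeries_eq_one_add_phi_zero]
  ring

/-- For every `i ≥ 0`, substituting `y(x)` into `F_i` yields `φ_i(x)`:
`F_i(y(x)) = Σ_{m≥1} (m^{m+i}/m!) x^m` in `ℚ⟦x⟧`. -/
theorem F_eval_ySeries (i : ℕ) :
    Polynomial.aeval ySeries (F i) = phi i := by
  induction i with
  | zero => simp [F, ySeries_eq_one_add_phi_zero]
  | succ i ih =>
    rw [← X_mul_derivative_phi, ← ih, Derivation.map_aeval, smul_eq_mul, mul_left_comm,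
      X_mul_derivative_ySeries, F]
    simp only [map_mul, map_sub, map_pow, Polynomial.aeval_X]
    ring
end

section
/- Let F_i ∈ ℚ[Y] be defined by F_0(Y) = Y − 1 and F_{i+1}(Y) = (Y² − Y) · Y · F_i′(Y), and let f(2,i) be the coefficient of Y^{2i} in F_i. Then for every i ≥ 1, f(2,i) = −(2i−2)!! · [1 + Σ_{k=1}^{i−1} (2k+1)!!/(2k)!!], where (2k)!! = 2·4⋯(2k) with 0!! = 1 and (2k+1)!! = 1·3·5⋯(2k+1). -/
/-!
Writing `F_{i+1} = (X² − X) · (X F_i′)` and using that `X · d/dX` multiplies the coefficient of `Yⁿ`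
by `n`, one gets `[Y^{n+2}] F_{i+1} = n [Yⁿ] F_i − (n+1) [Y^{n+1}] F_i`. Hence `deg F_i ≤ 2i + 1`,
the top coefficient is `(2i−1)‼`, and the next one satisfies
`f(2,i+1) = 2i · f(2,i) − (2i+1)‼`; dividing by `(2i)‼` telescopes this into the sum.
-/

open Nat Polynomial

theorem Polynomial.coeff_X_mul_derivative {R : Type*} [Semiring R] (p : R[X]) (n : ℕ) :
    (X * derivative p).coeff n = p.coeff n * n := by
  cases n with
  | zero => simp
  | succ n => rw [coeff_X_mul, coeff_derivative]; push_cast; rfl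

theorem coeff_F_succ (i n : ℕ) :
    (F (i + 1)).coeff (n + 2) = n * (F i).coeff n - (n + 1) * (F i).coeff (n + 1) := by
  have hF : F (i + 1) = X ^ 2 * (X * derivative (F i)) - X * (X * derivative (F i)) := by
    rw [F]; ring
  rw [hF, coeff_sub, coeff_X_pow_mul, coeff_X_mul, coeff_X_mul_derivative,
    coeff_X_mul_derivative]
  push_cast
  ring

theorem coeff_F_eq_zero_of_lt (i n : ℕ) (h : 2 * i + 1 < n) : (F i).coeff n = 0 := by
  induction i generalizing n with
  | zero =>
    rw [F, coeff_sub, coeff_X_of_ne_one (n := n) (by omega), coeff_one, if_neg (by omega),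
      sub_zero]
  | succ i ih =>
    obtain ⟨m, rfl⟩ : ∃ m, n = m + 2 := ⟨n - 2, by omega⟩
    rw [coeff_F_succ, ih m (by omega), ih (m + 1) (by omega)]
    ring

-- At `i = 0` the truncated `2 * 0 - 1 = 0` gives `0‼ = 1`, the right value.
theorem coeff_F_two_mul_add_one (i : ℕ) : (F i).coeff (2 * i + 1) = ((2 * i - 1)‼ : ℚ) := by
  induction i with
  | zero => simp [F, coeff_one]
  | succ i ih =>
    rw [show 2 * (i + 1) + 1 = (2 * i + 1) + 2 by ring, coeff_F_succ, ih,
      coeff_F_eq_zero_of_lt i (2 * i + 1 + 1) (by omega),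
      show 2 * (i + 1) - 1 = 2 * i + 1 by omega, doubleFactorial_add_one]
    push_cast
    ring

theorem coeff_F_succ_two_mul_add_two (i : ℕ) :
    (F (i + 1)).coeff (2 * i + 2) = 2 * i * (F i).coeff (2 * i) - ((2 * i + 1)‼ : ℚ) := by
  rw [coeff_F_succ, coeff_F_two_mul_add_one, doubleFactorial_add_one]
  push_cast
  ring

theorem coeff_F_succ_two_mul_add_two_eq_sum (i : ℕ) :
    (F (i + 1)).coeff (2 * i + 2) =
      -(((2 * i)‼ : ℚ) * (1 + ∑ k ∈ Finset.Icc 1 i, (((2 * k + 1)‼ : ℚ) / ((2 * k)‼ : ℚ)))) := by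
  induction i with
  | zero => simp [F]
  | succ i ih =>
    have hne : ((2 * i)‼ : ℚ) ≠ 0 := by positivity
    rw [coeff_F_succ_two_mul_add_two, show 2 * (i + 1) = 2 * i + 2 by ring, ih,
      Finset.sum_Icc_succ_top (by omega), show 2 * (i + 1) = 2 * i + 2 by ring,
      doubleFactorial_add_two (2 * i)]
    field_simp
    push_cast
    ring

theorem f_two_sum_formula_general (i : ℕ) :
    (F i).coeff (2 * i) =
      -(((2 * i - 2)‼ : ℚ) *
        (1 + ∑ k ∈ Finset.Icc 1 (i - 1), (((2 * k + 1)‼ : ℚ) / ((2 * k)‼ : ℚ)))) := by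
  cases i with
  | zero => simp [F]
  | succ i =>
    rw [show 2 * (i + 1) = 2 * i + 2 by ring, add_tsub_cancel_right, add_tsub_cancel_right]
    exact coeff_F_succ_two_mul_add_two_eq_sum i

/-- For every `i ≥ 1`, the coefficient `f(2,i)` of `Y^{2i}` in `F_i` equals
`−(2i−2)!! · [1 + Σ_{k=1}^{i−1} (2k+1)!!/(2k)!!]`. -/
theorem f_two_sum_formula (i : ℕ) (hi : 1 ≤ i) :
    (F i).coeff (2 * i) =
      -(((2 * i - 2)‼ : ℚ) *
        (1 + ∑ k ∈ Finset.Icc 1 (i - 1), (((2 * k + 1)‼ : ℚ) / ((2 * k)‼ : ℚ)))) :=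
  f_two_sum_formula_general i
end
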